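/- Let λ be a partition of a positive integer n and let f : ℕ → ℝ be an arbitrary function. Then the expected value of the descent function d_f over uniformly random standard Young tableaux of shape λ is E_λ[d_f] = c(λ) · Σ_{i=1}^{n−1} f(i). -/

import Mathlib

open scoped BigOperators

namespace YoungDiagram

/-- Partial sums of row lengths. -/
def rowSum (Y : YoungDiagram) (m : ℕ) : ℕ := ∑ r ∈ Finset.range m, Y.rowLen r

theorem rowSum_mono (Y : YoungDiagram) {m m' : ℕ} (h : m ≤ m') : Y.rowSum m ≤ Y.rowSum m' :=
  Finset.sum_le_sum_of_subset (Finset.range_subset_range.mpr h)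

theorem rowLen_eq_zero {Y : YoungDiagram} {r : ℕ} (h : Y.colLen 0 ≤ r) : Y.rowLen r = 0 := by
  by_contra hne
  have : (r, 0) ∈ Y := by rw [mem_iff_lt_rowLen]; omega
  rw [mem_iff_lt_colLen] at this
  omega

theorem cells_eq_biUnion (Y : YoungDiagram) :
    Y.cells = (Finset.range (Y.colLen 0)).biUnion (fun i => Y.row i) := by
  ext ⟨a, b⟩
  simp only [Finset.mem_biUnion, Finset.mem_range, mem_row_iff, mem_cells]
  constructor
  · intro h
    refine ⟨a, ?_, h, rfl⟩
    calc a < Y.colLen b := by rwa [← mem_iff_lt_colLen]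
    _ ≤ Y.colLen 0 := Y.colLen_anti 0 b (Nat.zero_le _)
  · rintro ⟨i, _, h, rfl⟩; exact h

theorem card_eq_rowSum (Y : YoungDiagram) : Y.card = Y.rowSum (Y.colLen 0) := by
  rw [YoungDiagram.card, cells_eq_biUnion, Finset.card_biUnion, rowSum]
  · exact Finset.sum_congr rfl fun i _ => (Y.rowLen_eq_card).symm
  · intro i _ j _ hij
    simp only [Finset.disjoint_left, mem_row_iff]
    rintro ⟨a, b⟩ ⟨_, rfl⟩ ⟨_, h⟩
    exact hij (h ▸ rfl)

theorem rowSum_le_card (Y : YoungDiagram) (m : ℕ) : Y.rowSum m ≤ Y.card := by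
  rcases le_total m (Y.colLen 0) with h | h
  · rw [card_eq_rowSum]; exact Y.rowSum_mono h
  · have : Y.rowSum m = Y.rowSum (Y.colLen 0) := by
      rw [rowSum, rowSum]
      refine (Finset.sum_subset (Finset.range_subset_range.mpr h) ?_).symm
      intro x _ hx
      exact rowLen_eq_zero (by simpa using hx)
    rw [this, ← card_eq_rowSum]

end YoungDiagram

/-- A standard Young tableau of shape `Y` (a Young diagram with `Y.card = n`):
a bijective filling of the cells of `Y` by the numbers `1, …, n`, strictly increasing
along each row (left to right) and down each column.  Entries outside the
diagram are `0`. -/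
structure SYT (Y : YoungDiagram) where
  entry : ℕ → ℕ → ℕ
  bijOn : Set.BijOn (fun c : ℕ × ℕ => entry c.1 c.2) ↑Y.cells (Set.Icc 1 Y.card)
  row_strict : ∀ ⦃i j1 j2 : ℕ⦄, j1 < j2 → (i, j2) ∈ Y → entry i j1 < entry i j2
  col_strict : ∀ ⦃i1 i2 j : ℕ⦄, i1 < i2 → (i2, j) ∈ Y → entry i1 j < entry i2 j
  zeros : ∀ ⦃i j : ℕ⦄, (i, j) ∉ Y → entry i j = 0

namespace SYT

variable {Y : YoungDiagram}

/-- `i` is a descent of `T` : the entry `i + 1` lies in a strictly lower row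
than the entry `i`. -/
def IsDescent (T : SYT Y) (i : ℕ) : Prop :=
  ∃ c ∈ Y.cells, ∃ c' ∈ Y.cells,
    T.entry c.1 c.2 = i ∧ T.entry c'.1 c'.2 = i + 1 ∧ c.1 < c'.1

open Classical in
/-- The descent set `D(T)` of a standard Young tableau, as a finset.
(Descents necessarily lie in `{1, …, n - 1}` ⊆ `range n`.) -/
noncomputable def descents (T : SYT Y) : Finset ℕ :=
  (Finset.range Y.card).filter fun i => T.IsDescent i

/-- The major index `maj(T) = ∑_{i ∈ D(T)} i`. -/
noncomputable def maj (T : SYT Y) : ℕ :=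
  ∑ i ∈ T.descents, i

/-- The descent function `d_f(T) = ∑_{i ∈ D(T)} f(i)`. -/
noncomputable def dfun (f : ℕ → ℝ) (T : SYT Y) : ℝ :=
  ∑ i ∈ T.descents, f i

end SYT

namespace SYT

variable {Y : YoungDiagram}

theorem ext' {T T' : SYT Y} (h : T.entry = T'.entry) : T = T' := by
  cases T; cases T'; cases h; rfl

theorem entry_mem {T : SYT Y} {c : ℕ × ℕ} (hc : c ∈ Y) :
    T.entry c.1 c.2 ∈ Set.Icc 1 Y.card :=
  T.bijOn.mapsTo (by simpa using hc)

theorem entry_inj {T : SYT Y} {c c' : ℕ × ℕ} (hc : c ∈ Y) (hc' : c' ∈ Y)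
    (h : T.entry c.1 c.2 = T.entry c'.1 c'.2) : c = c' :=
  T.bijOn.injOn (by simpa using hc) (by simpa using hc') h

instance : Finite (SYT Y) := by
  have : Function.Injective
      (fun (T : SYT Y) (c : {x // x ∈ Y.cells}) =>
        (⟨T.entry c.1.1 c.1.2, by
          have := entry_mem (T := T) (c := c.1) (by simpa using c.2)
          simpa using this⟩ : {m // m ∈ Finset.Icc 1 Y.card})) := by
    intro T T' h
    apply ext'
    funext i j
    by_cases hij : (i, j) ∈ Y
    · have := congrFun h ⟨(i,j), by simpa using hij⟩
      simpa using this
    · rw [T.zeros hij, T'.zeros hij]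
  exact Finite.of_injective _ this

noncomputable instance : Fintype (SYT Y) := Fintype.ofFinite _

open Classical in
/-- The cell of `T` containing the entry `m` (junk value `(0,0)` if there is none). -/
noncomputable def pos (T : SYT Y) (m : ℕ) : ℕ × ℕ :=
  if h : ∃ c : ℕ × ℕ, c ∈ Y ∧ T.entry c.1 c.2 = m then h.choose else (0, 0)

theorem pos_spec {T : SYT Y} {m : ℕ} (h1 : 1 ≤ m) (h2 : m ≤ Y.card) :
    T.pos m ∈ Y ∧ T.entry (T.pos m).1 (T.pos m).2 = m := by
  have h : ∃ c : ℕ × ℕ, c ∈ Y ∧ T.entry c.1 c.2 = m := by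
    obtain ⟨c, hc, hce⟩ := T.bijOn.surjOn (a := m) ⟨h1, h2⟩
    exact ⟨c, by simpa using hc, hce⟩
  rw [pos, dif_pos h]
  exact h.choose_spec

theorem pos_mem {T : SYT Y} {m : ℕ} (h1 : 1 ≤ m) (h2 : m ≤ Y.card) : T.pos m ∈ Y :=
  (pos_spec h1 h2).1

theorem entry_pos {T : SYT Y} {m : ℕ} (h1 : 1 ≤ m) (h2 : m ≤ Y.card) :
    T.entry (T.pos m).1 (T.pos m).2 = m :=
  (pos_spec h1 h2).2

theorem pos_eq {T : SYT Y} {m : ℕ} {c : ℕ × ℕ} (hc : c ∈ Y)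
    (he : T.entry c.1 c.2 = m) : T.pos m = c := by
  have h1 : 1 ≤ m := by
    have := entry_mem (T := T) hc; rw [he] at this; exact this.1
  have h2 : m ≤ Y.card := by
    have := entry_mem (T := T) hc; rw [he] at this; exact this.2
  exact entry_inj (pos_mem h1 h2) hc (by rw [entry_pos h1 h2, he])


/-- The entry `k+1` is directly right of `k`. -/
def IsH (T : SYT Y) (k : ℕ) : Prop := T.pos (k+1) = ((T.pos k).1, (T.pos k).2 + 1)

/-- The entry `k+1` is directly below `k`. -/
def IsV (T : SYT Y) (k : ℕ) : Prop := T.pos (k+1) = ((T.pos k).1 + 1, (T.pos k).2)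

/-- The cells of `k` and `k+1` are incomparable. -/
def FreeAt (T : SYT Y) (k : ℕ) : Prop :=
  (T.pos k).1 ≠ (T.pos (k+1)).1 ∧ (T.pos k).2 ≠ (T.pos (k+1)).2

theorem pos_coords (T : SYT Y) (m : ℕ) : ∃ a b, T.pos m = (a, b) :=
  ⟨(T.pos m).1, (T.pos m).2, rfl⟩

theorem pos_one {T : SYT Y} (h : 1 ≤ Y.card) : T.pos 1 = (0, 0) := by
  obtain ⟨a, b, hx⟩ := pos_coords T 1
  have hp : (a, b) ∈ Y := hx ▸ pos_mem (T := T) le_rfl h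
  have he : T.entry a b = 1 := by have := entry_pos (T := T) le_rfl h; rwa [hx] at this
  rcases Nat.eq_zero_or_pos b with h2 | h2
  · rcases Nat.eq_zero_or_pos a with h1 | h1
    · rw [hx, h1, h2]
    · exfalso
      have hY : ((0:ℕ), b) ∈ Y := Y.up_left_mem (Nat.zero_le _) le_rfl hp
      have hlt := T.col_strict h1 (j := b) hp
      have := (entry_mem (T := T) (c := ((0:ℕ), b)) hY).1
      simp only at hlt this
      omega
  · exfalso
    have hY : (a, (0:ℕ)) ∈ Y := Y.up_left_mem le_rfl (Nat.zero_le _) hp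
    have hlt := T.row_strict h2 (i := a) hp
    have := (entry_mem (T := T) (c := (a, (0:ℕ))) hY).1
    simp only at hlt this
    omega

/-- Consecutive entries: trichotomy. -/
theorem trichotomy {T : SYT Y} {k : ℕ} (h1 : 1 ≤ k) (h2 : k + 1 ≤ Y.card) :
    T.IsH k ∨ T.IsV k ∨ T.FreeAt k := by
  obtain ⟨a, b, hx⟩ := pos_coords T k
  obtain ⟨c, d, hy⟩ := pos_coords T (k+1)
  have hxY : (a, b) ∈ Y := hx ▸ pos_mem (T := T) h1 (by omega)
  have hyY : (c, d) ∈ Y := hy ▸ pos_mem (T := T) (by omega) h2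
  have hex : T.entry a b = k := by have := entry_pos (T := T) h1 (by omega); rwa [hx] at this
  have hey : T.entry c d = k + 1 := by
    have := entry_pos (T := T) (m := k+1) (by omega) h2; rwa [hy] at this
  rw [IsH, IsV, FreeAt, hx, hy]
  simp only
  by_cases hr : a = c
  · subst hr
    left
    have hbd : b < d := by
      rcases lt_trichotomy b d with h | h | h
      · exact h
      · subst h; omega
      · exact absurd (T.row_strict h hxY) (by omega)
    rcases Nat.lt_or_ge (b + 1) d with hgap | hgap
    · exfalso
      have hmid : (a, b + 1) ∈ Y := Y.up_left_mem le_rfl (by omega) hyY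
      have l1 := T.row_strict (show b < b + 1 by omega) hmid
      have l2 := T.row_strict hgap hyY
      omega
    · have : d = b + 1 := by omega
      rw [this]
  · by_cases hcol : b = d
    · subst hcol
      right; left
      have hac : a < c := by
        rcases lt_trichotomy a c with h | h | h
        · exact h
        · exact absurd h hr
        · exact absurd (T.col_strict h hxY) (by omega)
      rcases Nat.lt_or_ge (a + 1) c with hgap | hgap
      · exfalso
        have hmid : (a + 1, b) ∈ Y := Y.up_left_mem (by omega) le_rfl hyY
        have l1 := T.col_strict (show a < a + 1 by omega) hmid
        have l2 := T.col_strict hgap hyY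
        omega
      · have : c = a + 1 := by omega
        rw [this]
    · right; right; exact ⟨hr, hcol⟩

theorem IsH.not_freeAt {T : SYT Y} {k : ℕ} (h : T.IsH k) : ¬ T.FreeAt k := by
  intro hf; rw [IsH] at h; exact hf.1 (by rw [h])

theorem IsV.not_freeAt {T : SYT Y} {k : ℕ} (h : T.IsV k) : ¬ T.FreeAt k := by
  intro hf; rw [IsV] at h; exact hf.2 (by rw [h])

theorem FreeAt.not_isH {T : SYT Y} {k : ℕ} (h : T.FreeAt k) : ¬ T.IsH k :=
  fun hh => hh.not_freeAt h

theorem FreeAt.not_isV {T : SYT Y} {k : ℕ} (h : T.FreeAt k) : ¬ T.IsV k :=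
  fun hh => hh.not_freeAt h

theorem IsH.not_isV {T : SYT Y} {k : ℕ} (h : T.IsH k) : ¬ T.IsV k := by
  intro hv; rw [IsH] at h; rw [IsV, h] at hv
  have := congrArg Prod.fst hv; simp at this

theorem IsV.not_isH {T : SYT Y} {k : ℕ} (h : T.IsV k) : ¬ T.IsH k :=
  fun hh => hh.not_isV h

/-- Pattern (H,V) for `k, k+1, k+2` is impossible. -/
theorem not_isH_isV {T : SYT Y} {k : ℕ} (h1 : 1 ≤ k) (h2 : k + 2 ≤ Y.card)
    (hH : T.IsH k) (hV : T.IsV (k+1)) : False := by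
  obtain ⟨a, b, hx⟩ := pos_coords T k
  have hy : T.pos (k+1) = (a, b+1) := by rw [hH, hx]
  have hz : T.pos (k+2) = (a+1, b+1) := by rw [IsV] at hV; rw [hV, hy]
  have hzY : (a+1, b+1) ∈ Y := hz ▸ pos_mem (T := T) (m := k+2) (by omega) h2
  have hxY : (a, b) ∈ Y := hx ▸ pos_mem (T := T) h1 (by omega)
  have hex : T.entry a b = k := by have := entry_pos (T := T) h1 (by omega); rwa [hx] at this
  have hez : T.entry (a+1) (b+1) = k + 2 := by
    have := entry_pos (T := T) (m := k+2) (by omega) h2; rwa [hz] at this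
  have hwY : (a+1, b) ∈ Y := Y.up_left_mem le_rfl (by omega) hzY
  have l1 := T.col_strict (show a < a + 1 by omega) hwY
  have l2 := T.row_strict (show b < b + 1 by omega) hzY
  have hw : T.entry (a+1) b = k + 1 := by omega
  have : T.pos (k+1) = (a+1, b) := pos_eq hwY hw
  rw [hy] at this
  have := congrArg Prod.fst this; simp at this

/-- Pattern (V,H) for `k, k+1, k+2` is impossible. -/
theorem not_isV_isH {T : SYT Y} {k : ℕ} (h1 : 1 ≤ k) (h2 : k + 2 ≤ Y.card)
    (hV : T.IsV k) (hH : T.IsH (k+1)) : False := by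
  obtain ⟨a, b, hx⟩ := pos_coords T k
  have hy : T.pos (k+1) = (a+1, b) := by rw [hV, hx]
  have hz : T.pos (k+2) = (a+1, b+1) := by rw [IsH] at hH; rw [hH, hy]
  have hzY : (a+1, b+1) ∈ Y := hz ▸ pos_mem (T := T) (m := k+2) (by omega) h2
  have hex : T.entry a b = k := by have := entry_pos (T := T) h1 (by omega); rwa [hx] at this
  have hez : T.entry (a+1) (b+1) = k + 2 := by
    have := entry_pos (T := T) (m := k+2) (by omega) h2; rwa [hz] at this
  have hwY : (a, b+1) ∈ Y := Y.up_left_mem (by omega) le_rfl hzY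
  have hxY : (a, b) ∈ Y := hx ▸ pos_mem (T := T) h1 (by omega)
  have l1 := T.row_strict (show b < b + 1 by omega) hwY
  have l2 := T.col_strict (show a < a + 1 by omega) hzY
  have hw : T.entry a (b+1) = k + 1 := by omega
  have : T.pos (k+1) = (a, b+1) := pos_eq hwY hw
  rw [hy] at this
  have := congrArg Prod.fst this; simp at this


theorem swap_lt {k e1 e2 : ℕ} (h : e1 < e2) (hne : ¬(e1 = k ∧ e2 = k + 1)) :
    Equiv.swap k (k+1) e1 < Equiv.swap k (k+1) e2 := by
  simp only [Equiv.swap_apply_def]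
  split_ifs <;> omega

theorem swap_mapsTo {k n : ℕ} (h1 : 1 ≤ k) (h2 : k + 1 ≤ n) :
    Set.MapsTo (Equiv.swap k (k+1)) (Set.Icc 1 n) (Set.Icc 1 n) := by
  intro v hv
  obtain ⟨hv1, hv2⟩ := hv
  simp only [Equiv.swap_apply_def]
  split_ifs <;> constructor <;> omega

theorem swap_bijOn {k n : ℕ} (h1 : 1 ≤ k) (h2 : k + 1 ≤ n) :
    Set.BijOn (Equiv.swap k (k+1)) (Set.Icc 1 n) (Set.Icc 1 n) := by
  refine ⟨swap_mapsTo h1 h2, (Equiv.injective _).injOn, ?_⟩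
  intro v hv
  exact ⟨Equiv.swap k (k+1) v, swap_mapsTo h1 h2 hv, Equiv.swap_apply_self _ _ _⟩

open Classical in
/-- The Bender–Knuth style swap of the entries `k` and `k+1`, as a total function
(identity unless the two cells are incomparable). -/
noncomputable def tk (k : ℕ) (T : SYT Y) : SYT Y :=
  if h : 1 ≤ k ∧ k + 1 ≤ Y.card ∧ T.FreeAt k then
    { entry := fun i j => Equiv.swap k (k+1) (T.entry i j)
      bijOn := by
        have := Set.BijOn.comp (swap_bijOn (n := Y.card) h.1 h.2.1) T.bijOn
        exact this
      row_strict := by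
        intro i j1 j2 hj hY2
        refine swap_lt (T.row_strict hj hY2) ?_
        rintro ⟨e1, e2⟩
        have hY1 : (i, j1) ∈ Y := by
          by_contra hnot
          rw [T.zeros hnot] at e1; omega
        have p1 : T.pos k = (i, j1) := pos_eq hY1 e1
        have p2 : T.pos (k+1) = (i, j2) := pos_eq hY2 e2
        have := h.2.2.1
        rw [p1, p2] at this
        exact this rfl
      col_strict := by
        intro i1 i2 j hi hY2
        refine swap_lt (T.col_strict hi hY2) ?_
        rintro ⟨e1, e2⟩
        have hY1 : (i1, j) ∈ Y := by
          by_contra hnot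
          rw [T.zeros hnot] at e1; omega
        have p1 : T.pos k = (i1, j) := pos_eq hY1 e1
        have p2 : T.pos (k+1) = (i2, j) := pos_eq hY2 e2
        have := h.2.2.2
        rw [p1, p2] at this
        exact this rfl
      zeros := by
        intro i j hij
        show Equiv.swap k (k+1) (T.entry i j) = 0
        rw [T.zeros hij]
        exact Equiv.swap_apply_of_ne_of_ne (by omega) (by omega) }
  else T

theorem tk_entry {k : ℕ} {T : SYT Y} (h : 1 ≤ k ∧ k + 1 ≤ Y.card ∧ T.FreeAt k) (i j : ℕ) :
    (tk k T).entry i j = Equiv.swap k (k+1) (T.entry i j) := by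
  rw [tk, dif_pos h]

theorem tk_of_neg {k : ℕ} {T : SYT Y} (h : ¬(1 ≤ k ∧ k + 1 ≤ Y.card ∧ T.FreeAt k)) :
    tk k T = T := by
  rw [tk, dif_neg h]

theorem tk_pos {k : ℕ} {T : SYT Y} (h : 1 ≤ k ∧ k + 1 ≤ Y.card ∧ T.FreeAt k)
    {m : ℕ} (hm1 : 1 ≤ m) (hm2 : m ≤ Y.card) :
    (tk k T).pos m = T.pos (Equiv.swap k (k+1) m) := by
  have hsm : Equiv.swap k (k+1) m ∈ Set.Icc 1 Y.card :=
    swap_mapsTo h.1 h.2.1 ⟨hm1, hm2⟩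
  have hc : T.pos (Equiv.swap k (k+1) m) ∈ Y := pos_mem hsm.1 hsm.2
  refine pos_eq hc ?_
  rw [tk_entry h]
  rw [show T.entry (T.pos (Equiv.swap k (k+1) m)).1 (T.pos (Equiv.swap k (k+1) m)).2
      = Equiv.swap k (k+1) m from entry_pos hsm.1 hsm.2]
  exact Equiv.swap_apply_self _ _ _

theorem tk_pos_k {k : ℕ} {T : SYT Y} (h : 1 ≤ k ∧ k + 1 ≤ Y.card ∧ T.FreeAt k) :
    (tk k T).pos k = T.pos (k+1) := by
  rw [tk_pos h h.1 (by omega), Equiv.swap_apply_left]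

theorem tk_pos_k1 {k : ℕ} {T : SYT Y} (h : 1 ≤ k ∧ k + 1 ≤ Y.card ∧ T.FreeAt k) :
    (tk k T).pos (k+1) = T.pos k := by
  rw [tk_pos h (by omega) h.2.1, Equiv.swap_apply_right]

theorem tk_pos_other {k : ℕ} {T : SYT Y} (h : 1 ≤ k ∧ k + 1 ≤ Y.card ∧ T.FreeAt k)
    {m : ℕ} (hm1 : 1 ≤ m) (hm2 : m ≤ Y.card) (hne1 : m ≠ k) (hne2 : m ≠ k + 1) :
    (tk k T).pos m = T.pos m := by
  rw [tk_pos h hm1 hm2, Equiv.swap_apply_of_ne_of_ne hne1 hne2]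

theorem tk_freeAt {k : ℕ} {T : SYT Y} (h : 1 ≤ k ∧ k + 1 ≤ Y.card ∧ T.FreeAt k) :
    (tk k T).FreeAt k := by
  refine ⟨?_, ?_⟩ <;> rw [tk_pos_k h, tk_pos_k1 h]
  · exact (h.2.2.1 ∘ Eq.symm)
  · exact (h.2.2.2 ∘ Eq.symm)

theorem tk_tk {k : ℕ} (T : SYT Y) : tk k (tk k T) = T := by
  by_cases h : 1 ≤ k ∧ k + 1 ≤ Y.card ∧ T.FreeAt k
  · have h' : 1 ≤ k ∧ k + 1 ≤ Y.card ∧ (tk k T).FreeAt k := ⟨h.1, h.2.1, tk_freeAt h⟩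
    apply ext'
    funext i j
    rw [tk_entry h', tk_entry h, Equiv.swap_apply_self]
  · rw [tk_of_neg h, tk_of_neg h]

theorem tk_ne {k : ℕ} {T : SYT Y} (h : 1 ≤ k ∧ k + 1 ≤ Y.card ∧ T.FreeAt k) :
    tk k T ≠ T := by
  intro heq
  have h1 := tk_pos_k h
  rw [heq] at h1
  exact h.2.2.1 (by rw [h1])

theorem isDescent_iff {T : SYT Y} {i : ℕ} :
    T.IsDescent i ↔ 1 ≤ i ∧ i + 1 ≤ Y.card ∧ (T.pos i).1 < (T.pos (i+1)).1 := by
  constructor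
  · rintro ⟨c, hc, c', hc', he, he', hlt⟩
    rw [YoungDiagram.mem_cells] at hc hc'
    have hi := entry_mem (T := T) hc; rw [he] at hi
    have hi' := entry_mem (T := T) hc'; rw [he'] at hi'
    refine ⟨hi.1, hi'.2, ?_⟩
    rw [pos_eq hc he, pos_eq hc' he']
    exact hlt
  · rintro ⟨h1, h2, hlt⟩
    exact ⟨T.pos i, by rw [YoungDiagram.mem_cells]; exact pos_mem h1 (by omega),
      T.pos (i+1), by rw [YoungDiagram.mem_cells]; exact pos_mem (by omega) h2,
      entry_pos h1 (by omega), entry_pos (by omega) h2, hlt⟩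

theorem IsV.isDescent {T : SYT Y} {k : ℕ} (h1 : 1 ≤ k) (h2 : k + 1 ≤ Y.card)
    (h : T.IsV k) : T.IsDescent k := by
  rw [isDescent_iff]
  refine ⟨h1, h2, ?_⟩
  rw [IsV] at h
  rw [h]
  simp

theorem IsH.not_isDescent {T : SYT Y} {k : ℕ} (h : T.IsH k) : ¬ T.IsDescent k := by
  rw [IsH] at h
  rintro hd
  rw [isDescent_iff] at hd
  obtain ⟨_, _, hlt⟩ := hd
  rw [h] at hlt
  simp at hlt

theorem tk_isDescent_iff {k : ℕ} {T : SYT Y} (h : 1 ≤ k ∧ k + 1 ≤ Y.card ∧ T.FreeAt k) :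
    ((tk k T).IsDescent k ↔ ¬ T.IsDescent k) := by
  rw [isDescent_iff, isDescent_iff, tk_pos_k h, tk_pos_k1 h]
  have hne := h.2.2.1
  constructor
  · rintro ⟨_, _, hlt⟩ ⟨_, _, hlt'⟩; omega
  · intro hnot
    refine ⟨h.1, h.2.1, ?_⟩
    rcases Nat.lt_or_ge (T.pos (k+1)).1 (T.pos k).1 with hc | hc
    · exact hc
    · exfalso; exact hnot ⟨h.1, h.2.1, by omega⟩


end SYT



namespace SYT

variable {Y : YoungDiagram}

theorem canonical_surj_aux (Y : YoungDiagram) :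
    ∀ m v, 1 ≤ v → v ≤ Y.rowSum m → ∃ a b, (a, b) ∈ Y ∧ Y.rowSum a + b + 1 = v := by
  intro m
  induction m with
  | zero => intro v h1 h2; simp [YoungDiagram.rowSum] at h2; omega
  | succ m ih =>
    intro v h1 h2
    rcases le_or_gt v (Y.rowSum m) with h | h
    · exact ih v h1 h
    · have hs : Y.rowSum (m + 1) = Y.rowSum m + Y.rowLen m := Finset.sum_range_succ _ _
      refine ⟨m, v - Y.rowSum m - 1, ?_, by omega⟩
      rw [YoungDiagram.mem_iff_lt_rowLen]
      omega

/-- The canonical (row-reading) standard Young tableau. -/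
noncomputable def canonical (Y : YoungDiagram) : SYT Y where
  entry i j := if (i, j) ∈ Y then Y.rowSum i + j + 1 else 0
  bijOn := by
    refine ⟨?_, ?_, ?_⟩
    · rintro ⟨a, b⟩ hab
      rw [Finset.mem_coe, YoungDiagram.mem_cells] at hab
      simp only [if_pos hab]
      have hlt : b < Y.rowLen a := by rwa [← YoungDiagram.mem_iff_lt_rowLen]
      have hs : Y.rowSum (a + 1) = Y.rowSum a + Y.rowLen a := Finset.sum_range_succ _ _
      have := Y.rowSum_le_card (a + 1)
      exact ⟨by omega, by omega⟩
    · rintro ⟨a, b⟩ hab ⟨a', b'⟩ hab' h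
      rw [Finset.mem_coe, YoungDiagram.mem_cells] at hab hab'
      simp only [if_pos hab, if_pos hab'] at h
      have hlt : b < Y.rowLen a := by rwa [← YoungDiagram.mem_iff_lt_rowLen]
      have hlt' : b' < Y.rowLen a' := by rwa [← YoungDiagram.mem_iff_lt_rowLen]
      rcases lt_trichotomy a a' with hc | hc | hc
      · exfalso
        have h1 : Y.rowSum (a + 1) = Y.rowSum a + Y.rowLen a := Finset.sum_range_succ _ _
        have h2 := Y.rowSum_mono (show a + 1 ≤ a' by omega)
        omega
      · subst hc
        have : b = b' := by omega
        rw [this]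
      · exfalso
        have h1 : Y.rowSum (a' + 1) = Y.rowSum a' + Y.rowLen a' := Finset.sum_range_succ _ _
        have h2 := Y.rowSum_mono (show a' + 1 ≤ a by omega)
        omega
    · rintro v ⟨h1, h2⟩
      rw [Y.card_eq_rowSum] at h2
      obtain ⟨a, b, hab, hv⟩ := canonical_surj_aux Y _ v h1 h2
      refine ⟨(a, b), ?_, ?_⟩
      · rw [Finset.mem_coe, YoungDiagram.mem_cells]; exact hab
      · simp only [if_pos hab]; exact hv
  row_strict := by
    intro i j1 j2 hj h2
    have h1 : (i, j1) ∈ Y := Y.up_left_mem le_rfl (le_of_lt hj) h2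
    rw [if_pos h1, if_pos h2]
    omega
  col_strict := by
    intro i1 i2 j hi h2
    have h1 : (i1, j) ∈ Y := Y.up_left_mem (le_of_lt hi) le_rfl h2
    rw [if_pos h1, if_pos h2]
    have : Y.rowSum i1 < Y.rowSum i2 := by
      have hlt : j < Y.rowLen i1 := by rwa [← YoungDiagram.mem_iff_lt_rowLen]
      calc Y.rowSum i1 < Y.rowSum i1 + Y.rowLen i1 := by omega
      _ = Y.rowSum (i1 + 1) := (Finset.sum_range_succ _ _).symm
      _ ≤ Y.rowSum i2 := Y.rowSum_mono hi
    omega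
  zeros := by
    intro i j h
    rw [if_neg h]

instance : Nonempty (SYT Y) := ⟨canonical Y⟩

theorem natCard_pos : 0 < Nat.card (SYT Y) := Nat.card_pos

end SYT



namespace SYT

open Classical

variable {Y : YoungDiagram}

/-- The content of the cell containing `k`. -/
noncomputable def cont (T : SYT Y) (k : ℕ) : ℤ :=
  ((T.pos k).2 : ℤ) - ((T.pos k).1 : ℤ)

theorem sum_descent_aux (k : ℕ) (h1 : 1 ≤ k) (h2 : k + 1 ≤ Y.card) :
    ∑ T : SYT Y, ((if T.IsDescent k then (2:ℤ) else 0) - 1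
      - (if T.IsV k then 1 else 0) + (if T.IsH k then 1 else 0)) = 0 := by
  apply Finset.sum_ninvolution (g := tk k)
  · intro T
    rcases trichotomy (T := T) h1 h2 with hp | hp | hp
    · have hfix : tk k T = T := tk_of_neg (by
        push_neg; intro _ _; exact hp.not_freeAt)
      rw [hfix, if_neg hp.not_isDescent, if_neg hp.not_isV, if_pos hp]
      ring
    · have hfix : tk k T = T := tk_of_neg (by
        push_neg; intro _ _; exact hp.not_freeAt)
      rw [hfix, if_pos (hp.isDescent h1 h2), if_pos hp, if_neg hp.not_isH]
      ring
    · have hc : 1 ≤ k ∧ k + 1 ≤ Y.card ∧ T.FreeAt k := ⟨h1, h2, hp⟩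
      have hf' := tk_freeAt hc
      have hd := tk_isDescent_iff hc
      rw [if_neg hp.not_isV, if_neg hp.not_isH, if_neg hf'.not_isV, if_neg hf'.not_isH]
      by_cases hdd : T.IsDescent k
      · rw [if_pos hdd, if_neg (by rw [hd]; exact not_not_intro hdd)]; ring
      · rw [if_neg hdd, if_pos (hd.mpr hdd)]; ring
  · intro T hT
    rcases trichotomy (T := T) h1 h2 with hp | hp | hp
    · exfalso; apply hT
      rw [if_neg hp.not_isDescent, if_neg hp.not_isV, if_pos hp]; ring
    · exfalso; apply hT
      rw [if_pos (hp.isDescent h1 h2), if_pos hp, if_neg hp.not_isH]; ring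
    · exact tk_ne ⟨h1, h2, hp⟩
  · intro T; exact Finset.mem_univ _
  · intro T; exact tk_tk T

theorem sum_cont_step_aux (k : ℕ) (h1 : 1 ≤ k) (h2 : k + 1 ≤ Y.card) :
    ∑ T : SYT Y, (T.cont (k+1) - T.cont k
      - (if T.IsH k then (1:ℤ) else 0) + (if T.IsV k then 1 else 0)) = 0 := by
  apply Finset.sum_ninvolution (g := tk k)
  · intro T
    rcases trichotomy (T := T) h1 h2 with hp | hp | hp
    · have hfix : tk k T = T := tk_of_neg (by
        push_neg; intro _ _; exact hp.not_freeAt)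
      have hcont : T.cont (k+1) = T.cont k + 1 := by
        rw [IsH] at hp; rw [cont, cont, hp]; push_cast; ring
      rw [hfix, hcont, if_pos hp, if_neg (by
        intro hv; exact (hp.not_isV) hv)]
      ring
    · have hfix : tk k T = T := tk_of_neg (by
        push_neg; intro _ _; exact hp.not_freeAt)
      have hcont : T.cont (k+1) = T.cont k - 1 := by
        rw [IsV] at hp; rw [cont, cont, hp]; push_cast; ring
      rw [hfix, hcont, if_pos hp, if_neg hp.not_isH]
      ring
    · have hc : 1 ≤ k ∧ k + 1 ≤ Y.card ∧ T.FreeAt k := ⟨h1, h2, hp⟩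
      have hf' := tk_freeAt hc
      have e1 : (tk k T).cont k = T.cont (k+1) := by rw [cont, cont, tk_pos_k hc]
      have e2 : (tk k T).cont (k+1) = T.cont k := by rw [cont, cont, tk_pos_k1 hc]
      rw [if_neg hp.not_isH, if_neg hp.not_isV, if_neg hf'.not_isH, if_neg hf'.not_isV,
        e1, e2]
      ring
  · intro T hT
    rcases trichotomy (T := T) h1 h2 with hp | hp | hp
    · exfalso; apply hT
      have hcont : T.cont (k+1) = T.cont k + 1 := by
        rw [IsH] at hp; rw [cont, cont, hp]; push_cast; ring
      rw [hcont, if_pos hp, if_neg hp.not_isV]; ring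
    · exfalso; apply hT
      have hcont : T.cont (k+1) = T.cont k - 1 := by
        rw [IsV] at hp; rw [cont, cont, hp]; push_cast; ring
      rw [hcont, if_pos hp, if_neg hp.not_isH]; ring
    · exact tk_ne ⟨h1, h2, hp⟩
  · intro T; exact Finset.mem_univ _
  · intro T; exact tk_tk T



theorem isH_mk {T : SYT Y} {k' a b : ℕ} (hp : T.pos k' = (a, b))
    (hq : T.pos (k'+1) = (a, b+1)) : T.IsH k' := by
  rw [IsH, hp, hq]

theorem isV_mk {T : SYT Y} {k' a b : ℕ} (hp : T.pos k' = (a, b))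
    (hq : T.pos (k'+1) = (a+1, b)) : T.IsV k' := by
  rw [IsV, hp, hq]

theorem freeAt_mk {T : SYT Y} {k' a b c d : ℕ} (hp : T.pos k' = (a, b))
    (hq : T.pos (k'+1) = (c, d)) (h1 : a ≠ c) (h2 : b ≠ d) : T.FreeAt k' := by
  rw [FreeAt, hp, hq]
  exact ⟨h1, h2⟩

theorem not_freeAt_mk {T : SYT Y} {k' a b c d : ℕ} (hp : T.pos k' = (a, b))
    (hq : T.pos (k'+1) = (c, d)) (h : a = c ∨ b = d) : ¬ T.FreeAt k' := by
  rw [FreeAt, hp, hq]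
  rintro ⟨h1, h2⟩
  simp only at h1 h2
  rcases h with h | h
  · exact h1 h
  · exact h2 h

theorem not_isH_mk {T : SYT Y} {k' a b c d : ℕ} (hp : T.pos k' = (a, b))
    (hq : T.pos (k'+1) = (c, d)) (h : a ≠ c ∨ d ≠ b + 1) : ¬ T.IsH k' := by
  rw [IsH, hp, hq]
  intro he
  injection he with e1 e2
  simp only at e1 e2
  omega

theorem not_isV_mk {T : SYT Y} {k' a b c d : ℕ} (hp : T.pos k' = (a, b))
    (hq : T.pos (k'+1) = (c, d)) (h : c ≠ a + 1 ∨ d ≠ b) : ¬ T.IsV k' := by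
  rw [IsV, hp, hq]
  intro he
  injection he with e1 e2
  simp only at e1 e2
  omega

theorem pos_cell {T : SYT Y} {m a b : ℕ} (h1 : 1 ≤ m) (h2 : m ≤ Y.card)
    (h : T.pos m = (a, b)) : (a, b) ∈ Y ∧ T.entry a b = m := by
  constructor
  · have := pos_mem (T := T) h1 h2; rwa [h] at this
  · have := entry_pos (T := T) h1 h2; rwa [h] at this

/-- Subcase analysis for pattern (H, F): if the cell of `k+2` is comparable with the cell of
`k`, it sits directly below it. -/
theorem subHF {T : SYT Y} {k a b c d : ℕ} (h1 : 1 ≤ k) (h2 : k + 1 + 1 ≤ Y.card)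
    (hx : T.pos k = (a, b)) (hy : T.pos (k+1) = (a, b+1)) (hz : T.pos (k+1+1) = (c, d))
    (hfr1 : a ≠ c) (hfr2 : b + 1 ≠ d)
    (hnf : a = c ∨ b = d) : c = a + 1 ∧ d = b := by
  obtain ⟨hxY, hex⟩ := pos_cell h1 (by omega) hx
  obtain ⟨hyY, hey⟩ := pos_cell (by omega) (by omega) hy
  obtain ⟨hzY, hez⟩ := pos_cell (m := k+1+1) (by omega) (by omega) hz
  rcases hnf with h | h
  · exact absurd h hfr1
  · subst h
    have hac : a < c := by
      rcases lt_trichotomy a c with hh | hh | hh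
      · exact hh
      · exfalso; rw [hh] at hex; omega
      · exfalso; have := T.col_strict hh hxY; omega
    constructor
    · by_contra hne
      have hgap : a + 1 < c := by omega
      have hwY : (a + 1, b) ∈ Y := Y.up_left_mem (by omega) le_rfl hzY
      have l1 := T.col_strict (show a < a + 1 by omega) hwY
      have l2 := T.col_strict hgap hzY
      have hw : T.entry (a+1) b = k + 1 := by omega
      have := pos_eq hwY hw
      rw [hy] at this
      injection this with e1 e2
      omega
    · rfl

/-- Subcase analysis for pattern (V, F). -/
theorem subVF {T : SYT Y} {k a b c d : ℕ} (h1 : 1 ≤ k) (h2 : k + 1 + 1 ≤ Y.card)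
    (hx : T.pos k = (a, b)) (hy : T.pos (k+1) = (a+1, b)) (hz : T.pos (k+1+1) = (c, d))
    (hfr1 : a + 1 ≠ c) (hfr2 : b ≠ d)
    (hnf : a = c ∨ b = d) : c = a ∧ d = b + 1 := by
  obtain ⟨hxY, hex⟩ := pos_cell h1 (by omega) hx
  obtain ⟨hyY, hey⟩ := pos_cell (by omega) (by omega) hy
  obtain ⟨hzY, hez⟩ := pos_cell (m := k+1+1) (by omega) (by omega) hz
  rcases hnf with h | h
  · subst h
    have hbd : b < d := by
      rcases lt_trichotomy b d with hh | hh | hh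
      · exact hh
      · exfalso; rw [hh] at hex; omega
      · exfalso; have := T.row_strict hh hxY; omega
    refine ⟨rfl, ?_⟩
    by_contra hne
    have hgap : b + 1 < d := by omega
    have hwY : (a, b + 1) ∈ Y := Y.up_left_mem le_rfl (by omega) hzY
    have l1 := T.row_strict (show b < b + 1 by omega) hwY
    have l2 := T.row_strict hgap hzY
    have hw : T.entry a (b+1) = k + 1 := by omega
    have := pos_eq hwY hw
    rw [hy] at this
    injection this with e1 e2
    omega
  · exact absurd h hfr2

/-- Subcase analysis for pattern (F, H). -/
theorem subFH {T : SYT Y} {k a b c d : ℕ} (h1 : 1 ≤ k) (h2 : k + 1 + 1 ≤ Y.card)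
    (hx : T.pos k = (a, b)) (hy : T.pos (k+1) = (c, d)) (hz : T.pos (k+1+1) = (c, d+1))
    (hfr1 : a ≠ c) (hfr2 : b ≠ d)
    (hnf : a = c ∨ b = d + 1) : c = a + 1 ∧ b = d + 1 := by
  obtain ⟨hxY, hex⟩ := pos_cell h1 (by omega) hx
  obtain ⟨hyY, hey⟩ := pos_cell (by omega) (by omega) hy
  obtain ⟨hzY, hez⟩ := pos_cell (m := k+1+1) (by omega) (by omega) hz
  rcases hnf with h | h
  · exact absurd h hfr1
  · subst h
    refine ⟨?_, rfl⟩
    have hac : a < c := by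
      rcases lt_trichotomy a c with hh | hh | hh
      · exact hh
      · exact absurd hh hfr1
      · exfalso
        have := T.col_strict hh hxY
        omega
    by_contra hne
    have hgap : a + 1 < c := by omega
    have hwY : (a + 1, d + 1) ∈ Y := Y.up_left_mem (by omega) le_rfl hzY
    have l1 := T.col_strict (show a < a + 1 by omega) hwY
    have l2 := T.col_strict hgap hzY
    have hw : T.entry (a+1) (d+1) = k + 1 := by omega
    have := pos_eq hwY hw
    rw [hy] at this
    injection this with e1 e2
    omega

/-- Subcase analysis for pattern (F, V). -/
theorem subFV {T : SYT Y} {k a b c d : ℕ} (h1 : 1 ≤ k) (h2 : k + 1 + 1 ≤ Y.card)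
    (hx : T.pos k = (a, b)) (hy : T.pos (k+1) = (c, d)) (hz : T.pos (k+1+1) = (c+1, d))
    (hfr1 : a ≠ c) (hfr2 : b ≠ d)
    (hnf : a = c + 1 ∨ b = d) : a = c + 1 ∧ d = b + 1 := by
  obtain ⟨hxY, hex⟩ := pos_cell h1 (by omega) hx
  obtain ⟨hyY, hey⟩ := pos_cell (by omega) (by omega) hy
  obtain ⟨hzY, hez⟩ := pos_cell (m := k+1+1) (by omega) (by omega) hz
  rcases hnf with h | h
  · subst h
    refine ⟨rfl, ?_⟩
    have hbd : b < d := by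
      rcases lt_trichotomy b d with hh | hh | hh
      · exact hh
      · exact absurd hh hfr2
      · exfalso
        have := T.row_strict hh hxY
        omega
    by_contra hne
    have hgap : b + 1 < d := by omega
    have hwY : (c + 1, b + 1) ∈ Y := Y.up_left_mem le_rfl (by omega) hzY
    have l1 := T.row_strict (show b < b + 1 by omega) hwY
    have l2 := T.row_strict hgap hzY
    have hw : T.entry (c+1) (b+1) = k + 1 := by omega
    have := pos_eq hwY hw
    rw [hy] at this
    injection this with e1 e2
    omega
  · exact absurd h hfr2



open Classical in
/-- The composite involution used to prove that `b_k - a_k` is independent of `k`. -/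
noncomputable def phi (k : ℕ) (T : SYT Y) : SYT Y :=
  if T.FreeAt k then (if T.FreeAt (k+1) then T else tk (k+1) (tk k T))
  else (if T.FreeAt (k+1) then tk k (tk (k+1) T) else T)

open Classical in
/-- The local weight whose total sum is `(b_k - a_k) - (b_{k+1} - a_{k+1})`. -/
noncomputable def sg (k : ℕ) (T : SYT Y) : ℤ :=
  (if T.IsH k then (1:ℤ) else 0) - (if T.IsV k then 1 else 0)
    - (if T.IsH (k+1) then 1 else 0) + (if T.IsV (k+1) then 1 else 0)

open Classical in
theorem phi_def (k : ℕ) (T : SYT Y) : phi k T =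
    if T.FreeAt k then (if T.FreeAt (k+1) then T else tk (k+1) (tk k T))
    else (if T.FreeAt (k+1) then tk k (tk (k+1) T) else T) := rfl

open Classical in
theorem sg_def (k : ℕ) (T : SYT Y) : sg k T =
    (if T.IsH k then (1:ℤ) else 0) - (if T.IsV k then 1 else 0)
      - (if T.IsH (k+1) then 1 else 0) + (if T.IsV (k+1) then 1 else 0) := rfl

theorem phi_main {k : ℕ} (h1 : 1 ≤ k) (h2 : k + 1 + 1 ≤ Y.card) (T : SYT Y) :
    sg k T + sg k (phi k T) = 0 ∧ phi k (phi k T) = T ∧ (sg k T ≠ 0 → phi k T ≠ T) := by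
  have hk2 : k + 1 ≤ Y.card := by omega
  rcases trichotomy (T := T) h1 hk2 with p1 | p1 | p1 <;>
    rcases trichotomy (T := T) (k := k+1) (by omega) h2 with p2 | p2 | p2
  -- (H, H)
  · have hphi : phi k T = T := by
      rw [phi_def, if_neg p1.not_freeAt, if_neg p2.not_freeAt]
    have hsg : sg k T = 0 := by
      rw [sg_def, if_pos p1, if_neg p1.not_isV, if_pos p2, if_neg p2.not_isV]; ring
    exact ⟨by rw [hphi, hsg]; ring, by rw [hphi, hphi], fun h => absurd hsg h⟩
  -- (H, V): impossible
  · exact absurd p2 (fun hv => not_isH_isV h1 (by omega) p1 hv)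
  -- (H, F)
  · obtain ⟨a, b, hx⟩ := pos_coords T k
    have hy : T.pos (k+1) = (a, b+1) := by rw [IsH] at p1; rw [p1, hx]
    obtain ⟨c, d, hz⟩ := pos_coords T (k+1+1)
    have pf1 : a ≠ c := by have := p2.1; rw [hy, hz] at this; simpa using this
    have pf2 : b + 1 ≠ d := by have := p2.2; rw [hy, hz] at this; simpa using this
    have hc2 : 1 ≤ k + 1 ∧ k + 1 + 1 ≤ Y.card ∧ T.FreeAt (k+1) := ⟨by omega, h2, p2⟩
    set T1 := tk (k+1) T with hT1
    have q0 : T1.pos k = (a, b) := by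
      rw [hT1, tk_pos_other hc2 h1 (by omega) (by omega) (by omega), hx]
    have q1 : T1.pos (k+1) = (c, d) := by rw [hT1, tk_pos_k hc2, hz]
    have q2 : T1.pos (k+1+1) = (a, b+1) := by rw [hT1, tk_pos_k1 hc2, hy]
    have hsgT : sg k T = 1 := by
      rw [sg_def, if_pos p1, if_neg p1.not_isV, if_neg p2.not_isH, if_neg p2.not_isV]; ring
    have hphiT : phi k T = tk k T1 := by
      rw [phi_def, if_neg p1.not_freeAt, if_pos p2, ← hT1]
    by_cases hfz : a ≠ c ∧ b ≠ d
    · have hfree1 : T1.FreeAt k := freeAt_mk q0 q1 hfz.1 hfz.2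
      have hc1 : 1 ≤ k ∧ k + 1 ≤ Y.card ∧ T1.FreeAt k := ⟨h1, by omega, hfree1⟩
      set T2 := tk k T1 with hT2
      have r0 : T2.pos k = (c, d) := by rw [hT2, tk_pos_k hc1, q1]
      have r1 : T2.pos (k+1) = (a, b) := by rw [hT2, tk_pos_k1 hc1, q0]
      have r2 : T2.pos (k+1+1) = (a, b+1) := by
        rw [hT2, tk_pos_other hc1 (by omega) (by omega) (by omega) (by omega), q2]
      have hsgT2 : sg k T2 = -1 := by
        rw [sg_def, if_neg (not_isH_mk r0 r1 (Or.inl (Ne.symm hfz.1))),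
          if_neg (not_isV_mk r0 r1 (Or.inr hfz.2)),
          if_pos (isH_mk r1 r2), if_neg ((isH_mk r1 r2).not_isV)]
        ring
      have hfree2k : T2.FreeAt k := freeAt_mk r0 r1 (Ne.symm hfz.1) (Ne.symm hfz.2)
      have hnf2 : ¬ T2.FreeAt (k+1) := not_freeAt_mk r1 r2 (Or.inl rfl)
      have hback : phi k T2 = T := by
        rw [phi_def, if_pos hfree2k, if_neg hnf2, hT2, tk_tk, hT1, tk_tk]
      refine ⟨by rw [hphiT, hsgT, hsgT2]; ring,
        by rw [hphiT, hback], fun _ => ?_⟩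
      rw [hphiT]
      intro he
      rw [he] at r0
      have h' := hx.symm.trans r0
      injection h' with e1 e2
      exact hfz.1 e1
    · have hor : a = c ∨ b = d := by
        rcases not_and_or.mp hfz with h | h
        exacts [Or.inl (not_not.mp h), Or.inr (not_not.mp h)]
      obtain ⟨hc', hd'⟩ := subHF h1 h2 hx hy hz pf1 pf2 hor
      subst hc'; subst hd'
      have hnf1 : ¬ T1.FreeAt k := not_freeAt_mk q0 q1 (Or.inr rfl)
      have hfixk : tk k T1 = T1 := tk_of_neg (by rintro ⟨_, _, hf⟩; exact hnf1 hf)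
      have hphiT' : phi k T = T1 := by rw [hphiT, hfixk]
      have hsgT1 : sg k T1 = -1 := by
        rw [sg_def, if_pos (isV_mk q0 q1), if_neg ((isV_mk q0 q1).not_isH),
          if_neg (not_isH_mk q1 q2 (Or.inl (by omega))),
          if_neg (not_isV_mk q1 q2 (Or.inl (by omega)))]
        ring
      have hfree11 : T1.FreeAt (k+1) := freeAt_mk q1 q2 (by omega) (by omega)
      have hback : phi k T1 = T := by
        rw [phi_def, if_neg hnf1, if_pos hfree11, hT1, tk_tk]
        exact tk_of_neg (by rintro ⟨_, _, hf⟩; exact p1.not_freeAt hf)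
      refine ⟨by rw [hphiT', hsgT, hsgT1]; ring, by rw [hphiT', hback], fun _ => ?_⟩
      rw [hphiT']
      intro he
      have h' := congrArg (fun S : SYT Y => S.pos (k+1)) he
      rw [q1, hy] at h'
      injection h' with e1 e2
      omega
  -- (V, H): impossible
  · exact absurd p2 (fun hh => not_isV_isH h1 (by omega) p1 hh)
  -- (V, V)
  · have hphi : phi k T = T := by
      rw [phi_def, if_neg p1.not_freeAt, if_neg p2.not_freeAt]
    have hsg : sg k T = 0 := by
      rw [sg_def, if_neg p1.not_isH, if_pos p1, if_neg p2.not_isH, if_pos p2]; ring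
    exact ⟨by rw [hphi, hsg]; ring, by rw [hphi, hphi], fun h => absurd hsg h⟩
  -- (V, F)
  · obtain ⟨a, b, hx⟩ := pos_coords T k
    have hy : T.pos (k+1) = (a+1, b) := by rw [IsV] at p1; rw [p1, hx]
    obtain ⟨c, d, hz⟩ := pos_coords T (k+1+1)
    have pf1 : a + 1 ≠ c := by have := p2.1; rw [hy, hz] at this; simpa using this
    have pf2 : b ≠ d := by have := p2.2; rw [hy, hz] at this; simpa using this
    have hc2 : 1 ≤ k + 1 ∧ k + 1 + 1 ≤ Y.card ∧ T.FreeAt (k+1) := ⟨by omega, h2, p2⟩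
    set T1 := tk (k+1) T with hT1
    have q0 : T1.pos k = (a, b) := by
      rw [hT1, tk_pos_other hc2 h1 (by omega) (by omega) (by omega), hx]
    have q1 : T1.pos (k+1) = (c, d) := by rw [hT1, tk_pos_k hc2, hz]
    have q2 : T1.pos (k+1+1) = (a+1, b) := by rw [hT1, tk_pos_k1 hc2, hy]
    have hsgT : sg k T = -1 := by
      rw [sg_def, if_neg p1.not_isH, if_pos p1, if_neg p2.not_isH, if_neg p2.not_isV]; ring
    have hphiT : phi k T = tk k T1 := by
      rw [phi_def, if_neg p1.not_freeAt, if_pos p2, ← hT1]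
    by_cases hfz : a ≠ c ∧ b ≠ d
    · have hfree1 : T1.FreeAt k := freeAt_mk q0 q1 hfz.1 hfz.2
      have hc1 : 1 ≤ k ∧ k + 1 ≤ Y.card ∧ T1.FreeAt k := ⟨h1, by omega, hfree1⟩
      set T2 := tk k T1 with hT2
      have r0 : T2.pos k = (c, d) := by rw [hT2, tk_pos_k hc1, q1]
      have r1 : T2.pos (k+1) = (a, b) := by rw [hT2, tk_pos_k1 hc1, q0]
      have r2 : T2.pos (k+1+1) = (a+1, b) := by
        rw [hT2, tk_pos_other hc1 (by omega) (by omega) (by omega) (by omega), q2]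
      have hsgT2 : sg k T2 = 1 := by
        rw [sg_def, if_neg (not_isH_mk r0 r1 (Or.inl (Ne.symm hfz.1))),
          if_neg (not_isV_mk r0 r1 (Or.inr hfz.2)),
          if_neg ((isV_mk r1 r2).not_isH), if_pos (isV_mk r1 r2)]
        ring
      have hfree2k : T2.FreeAt k := freeAt_mk r0 r1 (Ne.symm hfz.1) (Ne.symm hfz.2)
      have hnf2 : ¬ T2.FreeAt (k+1) := not_freeAt_mk r1 r2 (Or.inr rfl)
      have hback : phi k T2 = T := by
        rw [phi_def, if_pos hfree2k, if_neg hnf2, hT2, tk_tk, hT1, tk_tk]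
      refine ⟨by rw [hphiT, hsgT, hsgT2]; ring,
        by rw [hphiT, hback], fun _ => ?_⟩
      rw [hphiT]
      intro he
      rw [he] at r0
      have h' := hx.symm.trans r0
      injection h' with e1 e2
      exact hfz.1 e1
    · have hor : a = c ∨ b = d := by
        rcases not_and_or.mp hfz with h | h
        exacts [Or.inl (not_not.mp h), Or.inr (not_not.mp h)]
      obtain ⟨hc', hd'⟩ := subVF h1 h2 hx hy hz pf1 pf2 hor
      subst hc'; subst hd'
      have hnf1 : ¬ T1.FreeAt k := not_freeAt_mk q0 q1 (Or.inl rfl)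
      have hfixk : tk k T1 = T1 := tk_of_neg (by rintro ⟨_, _, hf⟩; exact hnf1 hf)
      have hphiT' : phi k T = T1 := by rw [hphiT, hfixk]
      have hsgT1 : sg k T1 = 1 := by
        rw [sg_def, if_pos (isH_mk q0 q1), if_neg ((isH_mk q0 q1).not_isV),
          if_neg (not_isH_mk q1 q2 (Or.inl (by omega))),
          if_neg (not_isV_mk q1 q2 (Or.inr (by omega)))]
        ring
      have hfree11 : T1.FreeAt (k+1) := freeAt_mk q1 q2 (by omega) (by omega)
      have hback : phi k T1 = T := by
        rw [phi_def, if_neg hnf1, if_pos hfree11, hT1, tk_tk]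
        exact tk_of_neg (by rintro ⟨_, _, hf⟩; exact p1.not_freeAt hf)
      refine ⟨by rw [hphiT', hsgT, hsgT1]; ring, by rw [hphiT', hback], fun _ => ?_⟩
      rw [hphiT']
      intro he
      have h' := congrArg (fun S : SYT Y => S.pos (k+1)) he
      rw [q1, hy] at h'
      injection h' with e1 e2
      omega
  -- (F, H)
  · obtain ⟨a, b, hx⟩ := pos_coords T k
    obtain ⟨c, d, hy⟩ := pos_coords T (k+1)
    have hz : T.pos (k+1+1) = (c, d+1) := by rw [IsH] at p2; rw [p2, hy]
    have pf1 : a ≠ c := by have := p1.1; rw [hx, hy] at this; simpa using this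
    have pf2 : b ≠ d := by have := p1.2; rw [hx, hy] at this; simpa using this
    have hc1 : 1 ≤ k ∧ k + 1 ≤ Y.card ∧ T.FreeAt k := ⟨h1, by omega, p1⟩
    set T1 := tk k T with hT1
    have q0 : T1.pos k = (c, d) := by rw [hT1, tk_pos_k hc1, hy]
    have q1 : T1.pos (k+1) = (a, b) := by rw [hT1, tk_pos_k1 hc1, hx]
    have q2 : T1.pos (k+1+1) = (c, d+1) := by
      rw [hT1, tk_pos_other hc1 (by omega) (by omega) (by omega) (by omega), hz]
    have hsgT : sg k T = -1 := by
      rw [sg_def, if_neg p1.not_isH, if_neg p1.not_isV, if_pos p2, if_neg p2.not_isV]; ring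
    have hphiT : phi k T = tk (k+1) T1 := by
      rw [phi_def, if_pos p1, if_neg p2.not_freeAt, ← hT1]
    by_cases hfz : a ≠ c ∧ b ≠ d + 1
    · have hfree1 : T1.FreeAt (k+1) := freeAt_mk q1 q2 hfz.1 hfz.2
      have hc2' : 1 ≤ k + 1 ∧ k + 1 + 1 ≤ Y.card ∧ T1.FreeAt (k+1) := ⟨by omega, h2, hfree1⟩
      set T2 := tk (k+1) T1 with hT2
      have r0 : T2.pos k = (c, d) := by
        rw [hT2, tk_pos_other hc2' h1 (by omega) (by omega) (by omega), q0]
      have r1 : T2.pos (k+1) = (c, d+1) := by rw [hT2, tk_pos_k hc2', q2]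
      have r2 : T2.pos (k+1+1) = (a, b) := by rw [hT2, tk_pos_k1 hc2', q1]
      have hsgT2 : sg k T2 = 1 := by
        rw [sg_def, if_pos (isH_mk r0 r1), if_neg ((isH_mk r0 r1).not_isV),
          if_neg (not_isH_mk r1 r2 (Or.inl (Ne.symm hfz.1))),
          if_neg (not_isV_mk r1 r2 (Or.inr hfz.2))]
        ring
      have hnf2 : ¬ T2.FreeAt k := not_freeAt_mk r0 r1 (Or.inl rfl)
      have hfree2 : T2.FreeAt (k+1) := freeAt_mk r1 r2 (Ne.symm hfz.1) (Ne.symm hfz.2)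
      have hback : phi k T2 = T := by
        rw [phi_def, if_neg hnf2, if_pos hfree2, hT2, tk_tk, hT1, tk_tk]
      refine ⟨by rw [hphiT, hsgT, hsgT2]; ring,
        by rw [hphiT, hback], fun _ => ?_⟩
      rw [hphiT]
      intro he
      rw [he] at r1
      have h' := hy.symm.trans r1
      injection h' with e1 e2
      omega
    · have hor : a = c ∨ b = d + 1 := by
        rcases not_and_or.mp hfz with h | h
        exacts [Or.inl (not_not.mp h), Or.inr (not_not.mp h)]
      obtain ⟨hc', hb'⟩ := subFH h1 h2 hx hy hz pf1 pf2 hor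
      subst hc'; subst hb'
      have hnf1 : ¬ T1.FreeAt (k+1) := not_freeAt_mk q1 q2 (Or.inr rfl)
      have hfixk : tk (k+1) T1 = T1 := tk_of_neg (by rintro ⟨_, _, hf⟩; exact hnf1 hf)
      have hphiT' : phi k T = T1 := by rw [hphiT, hfixk]
      have hsgT1 : sg k T1 = 1 := by
        rw [sg_def, if_neg (not_isH_mk q0 q1 (Or.inl (by omega))),
          if_neg (not_isV_mk q0 q1 (Or.inl (by omega))),
          if_neg ((isV_mk q1 q2).not_isH), if_pos (isV_mk q1 q2)]
        ring
      have hfree1k : T1.FreeAt k := freeAt_mk q0 q1 (by omega) (by omega)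
      have hback : phi k T1 = T := by
        rw [phi_def, if_pos hfree1k, if_neg hnf1, hT1, tk_tk]
        exact tk_of_neg (by rintro ⟨_, _, hf⟩; exact p2.not_freeAt hf)
      refine ⟨by rw [hphiT', hsgT, hsgT1]; ring, by rw [hphiT', hback], fun _ => ?_⟩
      rw [hphiT']
      intro he
      have h' := congrArg (fun S : SYT Y => S.pos k) he
      rw [q0, hx] at h'
      injection h' with e1 e2
      omega
  -- (F, V)
  · obtain ⟨a, b, hx⟩ := pos_coords T k
    obtain ⟨c, d, hy⟩ := pos_coords T (k+1)
    have hz : T.pos (k+1+1) = (c+1, d) := by rw [IsV] at p2; rw [p2, hy]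
    have pf1 : a ≠ c := by have := p1.1; rw [hx, hy] at this; simpa using this
    have pf2 : b ≠ d := by have := p1.2; rw [hx, hy] at this; simpa using this
    have hc1 : 1 ≤ k ∧ k + 1 ≤ Y.card ∧ T.FreeAt k := ⟨h1, by omega, p1⟩
    set T1 := tk k T with hT1
    have q0 : T1.pos k = (c, d) := by rw [hT1, tk_pos_k hc1, hy]
    have q1 : T1.pos (k+1) = (a, b) := by rw [hT1, tk_pos_k1 hc1, hx]
    have q2 : T1.pos (k+1+1) = (c+1, d) := by
      rw [hT1, tk_pos_other hc1 (by omega) (by omega) (by omega) (by omega), hz]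
    have hsgT : sg k T = 1 := by
      rw [sg_def, if_neg p1.not_isH, if_neg p1.not_isV, if_neg p2.not_isH, if_pos p2]; ring
    have hphiT : phi k T = tk (k+1) T1 := by
      rw [phi_def, if_pos p1, if_neg p2.not_freeAt, ← hT1]
    by_cases hfz : a ≠ c + 1 ∧ b ≠ d
    · have hfree1 : T1.FreeAt (k+1) := freeAt_mk q1 q2 hfz.1 hfz.2
      have hc2' : 1 ≤ k + 1 ∧ k + 1 + 1 ≤ Y.card ∧ T1.FreeAt (k+1) := ⟨by omega, h2, hfree1⟩
      set T2 := tk (k+1) T1 with hT2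
      have r0 : T2.pos k = (c, d) := by
        rw [hT2, tk_pos_other hc2' h1 (by omega) (by omega) (by omega), q0]
      have r1 : T2.pos (k+1) = (c+1, d) := by rw [hT2, tk_pos_k hc2', q2]
      have r2 : T2.pos (k+1+1) = (a, b) := by rw [hT2, tk_pos_k1 hc2', q1]
      have hsgT2 : sg k T2 = -1 := by
        rw [sg_def, if_neg ((isV_mk r0 r1).not_isH), if_pos (isV_mk r0 r1),
          if_neg (not_isH_mk r1 r2 (Or.inl (Ne.symm hfz.1))),
          if_neg (not_isV_mk r1 r2 (Or.inr hfz.2))]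
        ring
      have hnf2 : ¬ T2.FreeAt k := not_freeAt_mk r0 r1 (Or.inr rfl)
      have hfree2 : T2.FreeAt (k+1) := freeAt_mk r1 r2 (Ne.symm hfz.1) (Ne.symm hfz.2)
      have hback : phi k T2 = T := by
        rw [phi_def, if_neg hnf2, if_pos hfree2, hT2, tk_tk, hT1, tk_tk]
      refine ⟨by rw [hphiT, hsgT, hsgT2]; ring,
        by rw [hphiT, hback], fun _ => ?_⟩
      rw [hphiT]
      intro he
      rw [he] at r1
      have h' := hy.symm.trans r1
      injection h' with e1 e2
      omega
    · have hor : a = c + 1 ∨ b = d := by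
        rcases not_and_or.mp hfz with h | h
        exacts [Or.inl (not_not.mp h), Or.inr (not_not.mp h)]
      obtain ⟨ha', hd'⟩ := subFV h1 h2 hx hy hz pf1 pf2 hor
      subst ha'; subst hd'
      have hnf1 : ¬ T1.FreeAt (k+1) := not_freeAt_mk q1 q2 (Or.inl rfl)
      have hfixk : tk (k+1) T1 = T1 := tk_of_neg (by rintro ⟨_, _, hf⟩; exact hnf1 hf)
      have hphiT' : phi k T = T1 := by rw [hphiT, hfixk]
      have hsgT1 : sg k T1 = -1 := by
        rw [sg_def, if_neg (not_isH_mk q0 q1 (Or.inl (by omega))),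
          if_neg (not_isV_mk q0 q1 (Or.inr (by omega))),
          if_pos (isH_mk q1 q2), if_neg ((isH_mk q1 q2).not_isV)]
        ring
      have hfree1k : T1.FreeAt k := freeAt_mk q0 q1 (by omega) (by omega)
      have hback : phi k T1 = T := by
        rw [phi_def, if_pos hfree1k, if_neg hnf1, hT1, tk_tk]
        exact tk_of_neg (by rintro ⟨_, _, hf⟩; exact p2.not_freeAt hf)
      refine ⟨by rw [hphiT', hsgT, hsgT1]; ring, by rw [hphiT', hback], fun _ => ?_⟩
      rw [hphiT']
      intro he
      have h' := congrArg (fun S : SYT Y => S.pos k) he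
      rw [q0, hx] at h'
      injection h' with e1 e2
      omega
  -- (F, F)
  · have hphi : phi k T = T := by
      rw [phi_def, if_pos p1, if_pos p2]
    have hsg : sg k T = 0 := by
      rw [sg_def, if_neg p1.not_isH, if_neg p1.not_isV, if_neg p2.not_isH, if_neg p2.not_isV]
      ring
    exact ⟨by rw [hphi, hsg]; ring, by rw [hphi, hphi], fun h => absurd hsg h⟩


/-- Key step: `b_k - a_k` does not depend on `k` (proved later via a composite involution). -/
theorem w_step (k : ℕ) (h1 : 1 ≤ k) (h2 : k + 2 ≤ Y.card) :
    ∑ T : SYT Y, ((if T.IsH k then (1:ℤ) else 0) - (if T.IsV k then 1 else 0)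
      - (if T.IsH (k+1) then 1 else 0) + (if T.IsV (k+1) then 1 else 0)) = 0 := by
  have key := phi_main (Y := Y) h1 (show k + 1 + 1 ≤ Y.card by omega)
  have hrw : ∀ T : SYT Y, ((if T.IsH k then (1:ℤ) else 0) - (if T.IsV k then 1 else 0)
      - (if T.IsH (k+1) then 1 else 0) + (if T.IsV (k+1) then 1 else 0)) = sg k T :=
    fun T => (sg_def k T).symm
  rw [Finset.sum_congr rfl fun T _ => hrw T]
  exact Finset.sum_ninvolution (phi k) (fun T => (key T).1) (fun T h => (key T).2.2 h)
    (fun T => Finset.mem_univ _) (fun T => (key T).2.1)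

end SYT



namespace YoungDiagram

theorem gauss (m : ℕ) : ∑ j ∈ Finset.range m, j = m.choose 2 := by
  have h := Finset.sum_range_id_mul_two m
  rw [Nat.choose_two_right]
  omega

theorem colLen_zero_le_card (Y : YoungDiagram) : Y.colLen 0 ≤ Y.card := by
  rw [Y.colLen_eq_card]
  exact Finset.card_le_card (fun c hc => (mem_col_iff.mp hc).1)

theorem rowLen_zero_le_card (Y : YoungDiagram) : Y.rowLen 0 ≤ Y.card := by
  rw [Y.rowLen_eq_card]
  exact Finset.card_le_card (fun c hc => (mem_row_iff.mp hc).1)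

theorem colLen_eq_zero {Y : YoungDiagram} {r : ℕ} (h : Y.rowLen 0 ≤ r) : Y.colLen r = 0 := by
  by_contra hne
  have : (0, r) ∈ Y := by rw [mem_iff_lt_colLen]; omega
  rw [mem_iff_lt_rowLen] at this
  omega

theorem cells_eq_biUnion_col (Y : YoungDiagram) :
    Y.cells = (Finset.range (Y.rowLen 0)).biUnion (fun j => Y.col j) := by
  ext ⟨a, b⟩
  simp only [Finset.mem_biUnion, Finset.mem_range, mem_col_iff, mem_cells]
  constructor
  · intro h
    refine ⟨b, ?_, h, rfl⟩
    calc b < Y.rowLen a := by rwa [← mem_iff_lt_rowLen]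
    _ ≤ Y.rowLen 0 := Y.rowLen_anti 0 a (Nat.zero_le _)
  · rintro ⟨i, _, h, rfl⟩; exact h

theorem sum_snd_cells (Y : YoungDiagram) :
    ∑ c ∈ Y.cells, c.2 = ∑ r ∈ Finset.range Y.card, (Y.rowLen r).choose 2 := by
  rw [cells_eq_biUnion, Finset.sum_biUnion]
  · have h1 : ∀ i, ∑ c ∈ Y.row i, c.2 = (Y.rowLen i).choose 2 := by
      intro i
      rw [row_eq_prod, Finset.sum_product, Finset.sum_singleton, ← gauss]
    rw [Finset.sum_congr rfl (fun i _ => h1 i)]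
    apply Finset.sum_subset (Finset.range_subset_range.mpr (Y.colLen_zero_le_card))
    intro x _ hx
    rw [rowLen_eq_zero (by simpa using hx)]
    rfl
  · intro i _ j _ hij
    simp only [Finset.disjoint_left, mem_row_iff]
    rintro ⟨a, b⟩ ⟨_, rfl⟩ ⟨_, h⟩
    exact hij (h ▸ rfl)

theorem sum_fst_cells (Y : YoungDiagram) :
    ∑ c ∈ Y.cells, c.1 = ∑ r ∈ Finset.range Y.card, (Y.colLen r).choose 2 := by
  rw [cells_eq_biUnion_col, Finset.sum_biUnion]
  · have h1 : ∀ j, ∑ c ∈ Y.col j, c.1 = (Y.colLen j).choose 2 := by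
      intro j
      rw [col_eq_prod, Finset.sum_product, ← gauss]
      simp
    rw [Finset.sum_congr rfl (fun i _ => h1 i)]
    apply Finset.sum_subset (Finset.range_subset_range.mpr (Y.rowLen_zero_le_card))
    intro x _ hx
    rw [colLen_eq_zero (by simpa using hx)]
    rfl
  · intro i _ j _ hij
    simp only [Finset.disjoint_left, mem_col_iff]
    rintro ⟨a, b⟩ ⟨_, rfl⟩ ⟨_, h⟩
    exact hij (h ▸ rfl)

end YoungDiagram

namespace SYT

open Classical

variable {Y : YoungDiagram}

theorem sum_cont_entries (T : SYT Y) :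
    ∑ k ∈ Finset.range Y.card, T.cont (k+1) = ∑ c ∈ Y.cells, ((c.2 : ℤ) - (c.1 : ℤ)) := by
  refine Finset.sum_nbij' (i := fun k => T.pos (k+1)) (j := fun c => T.entry c.1 c.2 - 1)
    ?_ ?_ ?_ ?_ ?_
  · intro k hk
    rw [Finset.mem_range] at hk
    rw [YoungDiagram.mem_cells]
    exact pos_mem (by omega) (by omega)
  · intro c hc
    rw [YoungDiagram.mem_cells] at hc
    have h := entry_mem (T := T) hc
    have h1 := h.1
    have h2 := h.2
    rw [Finset.mem_range]
    show T.entry c.1 c.2 - 1 < Y.card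
    omega
  · intro k hk
    rw [Finset.mem_range] at hk
    show T.entry (T.pos (k+1)).1 (T.pos (k+1)).2 - 1 = k
    rw [entry_pos (by omega) (by omega)]
    omega
  · intro c hc
    rw [YoungDiagram.mem_cells] at hc
    have h := entry_mem (T := T) hc
    have h1 := h.1
    have heq : T.entry c.1 c.2 - 1 + 1 = T.entry c.1 c.2 := by omega
    show T.pos (T.entry c.1 c.2 - 1 + 1) = c
    rw [heq]
    exact pos_eq hc rfl
  · intro k hk
    rfl

/-- The per-`i` count: `N_i · n(n-1) = f^λ · (C(n,2) - ΣC(λ_r,2) + ΣC(λ'_r,2))`. -/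
theorem key_count (i : ℕ) (hn : 2 ≤ Y.card) (hi1 : 1 ≤ i) (hi2 : i + 1 ≤ Y.card) :
    (∑ T : SYT Y, (if T.IsDescent i then (1:ℤ) else 0)) * (Y.card : ℤ) * ((Y.card : ℤ) - 1)
      = (Fintype.card (SYT Y) : ℤ) *
        ((Y.card.choose 2 : ℤ) - (∑ r ∈ Finset.range Y.card, ((Y.rowLen r).choose 2 : ℤ))
          + (∑ r ∈ Finset.range Y.card, ((Y.colLen r).choose 2 : ℤ))) := by
  set n := Y.card with hn'
  set F : ℤ := (Fintype.card (SYT Y) : ℤ) with hF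
  set Hs : ℕ → ℤ := fun k => ∑ T : SYT Y, (if T.IsH k then (1:ℤ) else 0) with hHs
  set Vs : ℕ → ℤ := fun k => ∑ T : SYT Y, (if T.IsV k then (1:ℤ) else 0) with hVs
  set Ns : ℕ → ℤ := fun k => ∑ T : SYT Y, (if T.IsDescent k then (1:ℤ) else 0) with hNs
  set As : ℕ → ℤ := fun k => ∑ T : SYT Y, T.cont k with hAs
  set s : ℤ := ∑ c ∈ Y.cells, ((c.2 : ℤ) - (c.1 : ℤ)) with hs
  have hsum_const : ∑ _T : SYT Y, (1:ℤ) = F := by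
    rw [Finset.sum_const, Finset.card_univ]; simp [hF]
  -- split R1
  have h2N : ∀ k, 1 ≤ k → k + 1 ≤ n → 2 * Ns k = F + Vs k - Hs k := by
    intro k h1 h2
    have h0 := sum_descent_aux (Y := Y) k h1 h2
    rw [Finset.sum_add_distrib, Finset.sum_sub_distrib, Finset.sum_sub_distrib,
      hsum_const] at h0
    have e2 : ∑ T : SYT Y, (if T.IsDescent k then (2:ℤ) else 0) = 2 * Ns k := by
      rw [hNs, Finset.mul_sum]
      refine Finset.sum_congr rfl fun T _ => ?_
      split_ifs <;> ring
    rw [e2] at h0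
    linarith
  -- split R2
  have hAstep : ∀ k, 1 ≤ k → k + 1 ≤ n → As (k+1) = As k + (Hs k - Vs k) := by
    intro k h1 h2
    have h0 := sum_cont_step_aux (Y := Y) k h1 h2
    rw [Finset.sum_add_distrib, Finset.sum_sub_distrib, Finset.sum_sub_distrib] at h0
    have : ∑ T : SYT Y, T.cont (k+1) = As (k+1) := rfl
    linarith [h0]
  -- w constant
  have hwc : ∀ k, 1 ≤ k → k + 1 ≤ n → Hs k - Vs k = Hs 1 - Vs 1 := by
    intro k
    induction k with
    | zero => intro h; omega
    | succ m ih =>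
      intro h1 h2
      rcases Nat.eq_zero_or_pos m with rfl | hm
      · rfl
      · have h0 := w_step (Y := Y) m hm (by omega)
        rw [Finset.sum_add_distrib, Finset.sum_sub_distrib, Finset.sum_sub_distrib] at h0
        have := ih hm (by omega)
        have e : Hs m - Vs m - (Hs (m+1) - Vs (m+1)) = 0 := by
          have : ∑ T : SYT Y, (if T.IsH m then (1:ℤ) else 0) = Hs m := rfl
          linarith [h0]
        linarith
  -- A 1 = 0
  have hA1 : As 1 = 0 := by
    rw [hAs]
    refine Finset.sum_eq_zero fun T _ => ?_
    rw [cont, pos_one (by omega)]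
    simp
  -- A k = (k-1) * w1
  have hAk : ∀ k, 1 ≤ k → k ≤ n → As k = ((k:ℤ) - 1) * (Hs 1 - Vs 1) := by
    intro k
    induction k with
    | zero => intro h; omega
    | succ m ih =>
      intro h1 h2
      rcases Nat.eq_zero_or_pos m with rfl | hm
      · rw [hA1]; simp
      · rw [hAstep m hm (by omega), ih hm (by omega), hwc m hm (by omega)]
        push_cast
        ring
  -- total content
  have htot : (n.choose 2 : ℤ) * (Hs 1 - Vs 1) = F * s := by
    have h0 : ∑ k ∈ Finset.range n, As (k+1) = F * s := by
      rw [hAs]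
      rw [Finset.sum_comm]
      have : ∀ T : SYT Y, ∑ k ∈ Finset.range n, T.cont (k+1) = s := fun T =>
        sum_cont_entries T
      rw [Finset.sum_congr rfl fun T _ => this T, Finset.sum_const, Finset.card_univ]
      simp [hF, mul_comm]
    have h1 : ∑ k ∈ Finset.range n, As (k+1) =
        (∑ k ∈ Finset.range n, (k:ℤ)) * (Hs 1 - Vs 1) := by
      rw [Finset.sum_mul]
      refine Finset.sum_congr rfl fun k hk => ?_
      rw [Finset.mem_range] at hk
      rw [hAk (k+1) (by omega) (by omega)]
      push_cast
      ring
    have h2 : ∑ k ∈ Finset.range n, (k:ℤ) = (n.choose 2 : ℤ) := by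
      rw [← YoungDiagram.gauss]
      push_cast
      rfl
    rw [h1, h2] at h0
    exact h0
  -- n(n-1) = 2 * choose
  have hch : (n:ℤ) * ((n:ℤ) - 1) = 2 * (n.choose 2 : ℤ) := by
    have h := Finset.sum_range_id_mul_two n
    rw [YoungDiagram.gauss] at h
    have : ((n.choose 2 * 2 : ℕ) : ℤ) = ((n * (n-1) : ℕ) : ℤ) := by rw [h]
    push_cast [Nat.cast_sub (show 1 ≤ n by omega)] at this
    linarith
  -- s = sr - sc
  have hsrc : s = (∑ r ∈ Finset.range n, ((Y.rowLen r).choose 2 : ℤ))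
      - (∑ r ∈ Finset.range n, ((Y.colLen r).choose 2 : ℤ)) := by
    rw [hs, Finset.sum_sub_distrib]
    congr 1
    · rw [← Nat.cast_sum, ← Nat.cast_sum, Y.sum_snd_cells]
    · rw [← Nat.cast_sum, ← Nat.cast_sum, Y.sum_fst_cells]
  -- final
  have e1 : 2 * Ns i = F - (Hs 1 - Vs 1) := by
    have := h2N i hi1 hi2
    have := hwc i hi1 hi2
    linarith
  calc Ns i * (n:ℤ) * ((n:ℤ) - 1) = Ns i * ((n:ℤ) * ((n:ℤ) - 1)) := by ring
  _ = Ns i * (2 * (n.choose 2 : ℤ)) := by rw [hch]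
  _ = (2 * Ns i) * (n.choose 2 : ℤ) := by ring
  _ = (F - (Hs 1 - Vs 1)) * (n.choose 2 : ℤ) := by rw [e1]
  _ = F * (n.choose 2 : ℤ) - (n.choose 2 : ℤ) * (Hs 1 - Vs 1) := by ring
  _ = F * (n.choose 2 : ℤ) - F * s := by rw [htot]
  _ = F * ((n.choose 2 : ℤ)
      - (∑ r ∈ Finset.range n, ((Y.rowLen r).choose 2 : ℤ))
      + (∑ r ∈ Finset.range n, ((Y.colLen r).choose 2 : ℤ))) := by rw [hsrc]; ring

end SYT


/-- Expectation of a statistic `g` over uniformly random standard Young tableaux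
of shape `Y` : `E_λ[g] = (1/f^λ) ∑_T g(T)`. -/
noncomputable def sytExpect (Y : YoungDiagram) (g : SYT Y → ℝ) : ℝ :=
  (∑ᶠ T : SYT Y, g T) / (Nat.card (SYT Y) : ℝ)

/-- Variance of a statistic `g` : `Var_λ[g] = E_λ[g²] − (E_λ[g])²`. -/
noncomputable def sytVar (Y : YoungDiagram) (g : SYT Y → ℝ) : ℝ :=
  sytExpect Y (fun T => (g T) ^ 2) - (sytExpect Y g) ^ 2

/-- Probability of an event `P` for a uniformly random standard Young tableau of shape `Y`. -/
noncomputable def sytProb (Y : YoungDiagram) (P : SYT Y → Prop) : ℝ :=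
  (Nat.card {T : SYT Y // P T} : ℝ) / (Nat.card (SYT Y) : ℝ)

/-- The constant `c(λ) = [C(n,2) − Σ_i C(λ_i,2) + Σ_j C(λ'_j,2)] / (n(n−1))`.
Rows and columns are 0-indexed; since `Y` has at most `Y.card` nonempty rows and
columns, the sums over `range Y.card` capture all nonzero terms. -/
noncomputable def cpar (Y : YoungDiagram) : ℝ :=
  ((Y.card.choose 2 : ℝ) - ∑ i ∈ Finset.range Y.card, ((Y.rowLen i).choose 2 : ℝ)
      + ∑ j ∈ Finset.range Y.card, ((Y.colLen j).choose 2 : ℝ))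
    / ((Y.card : ℝ) * ((Y.card : ℝ) - 1))

/-- The hook length of the cell `c = (i, j)` (0-indexed):
`h_{ij} = λ_{i+1} + λ'_{j+1} − (i+1) − (j+1) + 1 = rowLen i + colLen j − i − j − 1`. -/
def hookLen (Y : YoungDiagram) (c : ℕ × ℕ) : ℕ :=
  Y.rowLen c.1 + Y.colLen c.2 - c.1 - c.2 - 1

/-- For a partition `λ` of a positive integer `n` and an arbitrary
function `f : ℕ → ℝ`, the expected value of the descent function `d_f` over uniformly
random standard Young tableaux of shape `λ` is
`E_λ[d_f] = c(λ)·Σ_{i=1}^{n−1} f(i)`. -/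
theorem expected_descent_function (n : ℕ) (hn : 0 < n) (Y : YoungDiagram) (hY : Y.card = n)
    (f : ℕ → ℝ) :
    sytExpect Y (SYT.dfun f) = cpar Y * ∑ i ∈ Finset.Icc 1 (n - 1), f i := by
  classical
  subst hY
  have hFpos : 0 < Fintype.card (SYT Y) := Fintype.card_pos
  have hNc : Nat.card (SYT Y) = Fintype.card (SYT Y) := Nat.card_eq_fintype_card
  have hN0 : ∑ T : SYT Y, (if T.IsDescent 0 then (1:ℤ) else 0) = 0 := by
    refine Finset.sum_eq_zero fun T _ => ?_
    rw [if_neg]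
    intro hd
    rw [SYT.isDescent_iff] at hd
    omega
  have hexp : sytExpect Y (SYT.dfun f)
      = (∑ i ∈ Finset.range Y.card,
          f i * ((∑ T : SYT Y, (if T.IsDescent i then (1:ℤ) else 0) : ℤ) : ℝ))
        / (Fintype.card (SYT Y) : ℝ) := by
    rw [sytExpect, finsum_eq_sum_of_fintype, hNc]
    congr 1
    have h1 : ∀ T : SYT Y, SYT.dfun f T
        = ∑ i ∈ Finset.range Y.card, (if T.IsDescent i then f i else 0) := by
      intro T
      rw [SYT.dfun, SYT.descents, Finset.sum_filter]
    rw [Finset.sum_congr rfl fun T _ => h1 T, Finset.sum_comm]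
    refine Finset.sum_congr rfl fun i _ => ?_
    have hcast : ((∑ T : SYT Y, (if T.IsDescent i then (1:ℤ) else 0) : ℤ) : ℝ)
        = ∑ T : SYT Y, (if T.IsDescent i then (1:ℝ) else 0) := by
      push_cast
      rfl
    rw [hcast, Finset.mul_sum]
    refine Finset.sum_congr rfl fun T _ => ?_
    split_ifs <;> simp
  by_cases h2 : Y.card = 1
  · rw [hexp, h2]
    rw [Finset.sum_range_one, hN0]
    norm_num
  · have h2' : 2 ≤ Y.card := by omega
    have hnR : (2:ℝ) ≤ (Y.card : ℝ) := by exact_mod_cast h2'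
    have hnn0 : ((Y.card : ℝ)) * ((Y.card : ℝ) - 1) ≠ 0 := by
      intro h
      rcases mul_eq_zero.mp h with h | h <;> nlinarith
    have hF0 : ((Fintype.card (SYT Y) : ℝ)) ≠ 0 := by positivity
    set K : ℝ := ((Y.card.choose 2 : ℝ)
        - ∑ r ∈ Finset.range Y.card, ((Y.rowLen r).choose 2 : ℝ)
        + ∑ r ∈ Finset.range Y.card, ((Y.colLen r).choose 2 : ℝ)) with hK
    have hkey : ∀ i ∈ Finset.Ico 1 Y.card,
        ((∑ T : SYT Y, (if T.IsDescent i then (1:ℤ) else 0) : ℤ) : ℝ)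
          = (Fintype.card (SYT Y) : ℝ) * K / ((Y.card : ℝ) * ((Y.card : ℝ) - 1)) := by
      intro i hi
      rw [Finset.mem_Ico] at hi
      have h := SYT.key_count (Y := Y) i h2' hi.1 (by omega)
      have hcast : ((∑ T : SYT Y, (if T.IsDescent i then (1:ℤ) else 0) : ℤ) : ℝ)
          * (Y.card : ℝ) * ((Y.card : ℝ) - 1) = (Fintype.card (SYT Y) : ℝ) * K := by
        rw [hK]
        exact_mod_cast congrArg (fun z : ℤ => (z : ℝ)) h
      rw [eq_div_iff hnn0]
      linear_combination hcast
    rw [hexp]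
    rw [Finset.range_eq_Ico, Finset.sum_eq_sum_Ico_succ_bot (by omega : 0 < Y.card)]
    rw [hN0]
    rw [Finset.sum_congr rfl fun i hi => by rw [hkey i hi]]
    rw [← Finset.sum_mul]
    have hIcc : Finset.Icc 1 (Y.card - 1) = Finset.Ico 1 Y.card := by
      rw [← Finset.Ico_add_one_right_eq_Icc]
      congr 1
      omega
    rw [hIcc, cpar]
    push_cast
    field_simp
    ring
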